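/- Let B* ∈ ℝ^{k×d} have orthonormal rows, let v* ∈ ℝ^k, let X ∈ ℝ^{n×d}, and let S ⊆ ℝ^d be the span of the rows of X with k ≤ dim S. If cangle(rowspace(B*), S) > 0, then v* is the unique global minimizer of the linear-probing loss v ↦ ‖X B*ᵀ v − X B*ᵀ v*‖₂² over v ∈ ℝ^k; in particular, the linear-probing solution v satisfies B*ᵀ v = B*ᵀ v*. -/

import Mathlib

open Matrix

noncomputable section

/-- View a plain vector as an element of Euclidean space. -/
def toE {n : ℕ} (x : Fin n → ℝ) : EuclideanSpace ℝ (Fin n) := WithLp.toLp 2 x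

/-- Euclidean (ℓ2) norm of a vector. -/
def enorm2 {n : ℕ} (x : Fin n → ℝ) : ℝ := ‖toE x‖

/-- Row space of a matrix, as a subspace of Euclidean space. -/
def rowspace {k d : ℕ} (B : Matrix (Fin k) (Fin d) ℝ) :
    Submodule ℝ (EuclideanSpace ℝ (Fin d)) :=
  Submodule.span ℝ (Set.range fun i => toE (B i))

/-- Cosine of the largest principal angle between subspaces `R` and `T` of `ℝ^d`. -/
def cangle {d : ℕ} (R T : Submodule ℝ (EuclideanSpace ℝ (Fin d))) : ℝ :=
  sInf {c | ∃ r ∈ R, ‖r‖ = 1 ∧ c = ‖(T.orthogonalProjection r : EuclideanSpace ℝ (Fin d))‖}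

/-! A positive cosine means that no nonzero vector of `rowspace B*` is orthogonal to `S`. If
`X B*ᵀ w = 0`, then `B*ᵀ w` lies in `rowspace B*` and is orthogonal to every row of `X`, so it
vanishes, and `B* B*ᵀ = I` gives `w = 0`. Hence `v ↦ X B*ᵀ v` is injective, and the loss, which
is zero at `v*`, is positive at every other `v`. -/

lemma enorm2_nonneg {n : ℕ} (x : Fin n → ℝ) : 0 ≤ enorm2 x := norm_nonneg _

lemma enorm2_eq_zero {n : ℕ} {x : Fin n → ℝ} : enorm2 x = 0 ↔ x = 0 := by
  simp [enorm2, toE]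

lemma toE_transpose_mulVec_mem_rowspace {k d : ℕ} (B : Matrix (Fin k) (Fin d) ℝ)
    (w : Fin k → ℝ) : toE (Bᵀ *ᵥ w) ∈ rowspace B := by
  have hsum : toE (Bᵀ *ᵥ w) = ∑ i, w i • toE (B i) := by
    simp only [mulVec_transpose, vecMul_eq_sum, toE, WithLp.toLp_sum, WithLp.toLp_smul]
  rw [hsum]
  exact Submodule.sum_mem _ fun i _ => Submodule.smul_mem _ _ (Submodule.subset_span ⟨i, rfl⟩)

lemma toE_mem_orthogonal_rowspace_of_mulVec_eq_zero {n d : ℕ}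
    (X : Matrix (Fin n) (Fin d) ℝ) {y : Fin d → ℝ} (h : X *ᵥ y = 0) :
    toE y ∈ (rowspace X)ᗮ := by
  have hortho : Submodule.span ℝ {toE y} ⟂ rowspace X := by
    refine Submodule.isOrtho_comm.mp (Submodule.isOrtho_span.mpr ?_)
    rintro _ ⟨i, rfl⟩ _ rfl
    simpa [EuclideanSpace.inner_eq_star_dotProduct, toE, mulVec, dotProduct_comm] using congrFun h i
  exact hortho.le (Submodule.mem_span_singleton_self _)

lemma eq_zero_of_mem_of_mem_orthogonal_of_cangle_pos {d : ℕ}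
    {R T : Submodule ℝ (EuclideanSpace ℝ (Fin d))} (hc : 0 < cangle R T)
    {r : EuclideanSpace ℝ (Fin d)} (hR : r ∈ R) (hT : r ∈ Tᗮ) : r = 0 := by
  by_contra hr
  rw [cangle] at hc
  refine hc.not_ge (csInf_le ⟨0, ?_⟩ ⟨‖r‖⁻¹ • r, R.smul_mem _ hR, norm_smul_inv_norm hr, ?_⟩)
  · rintro _ ⟨r, -, -, rfl⟩
    positivity
  · rw [Submodule.orthogonalProjectionOnto_apply_of_mem_orthogonal (Tᗮ.smul_mem _ hT)]
    simp

lemma injective_mulVec_transpose_mulVec_of_cangle_pos {n d k : ℕ}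
    (B : Matrix (Fin k) (Fin d) ℝ) (hB : B * Bᵀ = 1) (X : Matrix (Fin n) (Fin d) ℝ)
    (hc : 0 < cangle (rowspace B) (rowspace X)) :
    Function.Injective fun v => X *ᵥ Bᵀ *ᵥ v := by
  intro v w hvw
  have hX : X *ᵥ Bᵀ *ᵥ (v - w) = 0 := by
    simpa only [mulVec_sub, sub_eq_zero] using hvw
  have hBt : Bᵀ *ᵥ (v - w) = 0 := by
    have := eq_zero_of_mem_of_mem_orthogonal_of_cangle_pos hc
      (toE_transpose_mulVec_mem_rowspace B (v - w))
      (toE_mem_orthogonal_rowspace_of_mulVec_eq_zero X hX)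
    simpa [toE] using this
  have : v - w = 0 := by
    simpa only [mulVec_mulVec, hB, one_mulVec, mulVec_zero] using congrArg (B *ᵥ ·) hBt
  exact sub_eq_zero.mp this

theorem stmt_15_general {n d k : ℕ} (Bstar : Matrix (Fin k) (Fin d) ℝ) (hBs : Bstar * Bstarᵀ = 1)
    (vstar : Fin k → ℝ) (X : Matrix (Fin n) (Fin d) ℝ)
    (hc : 0 < cangle (rowspace Bstar) (rowspace X)) :
    (∀ v : Fin k → ℝ, v ≠ vstar →
      enorm2 (X.mulVec (Bstarᵀ.mulVec vstar) - X.mulVec (Bstarᵀ.mulVec vstar)) ^ 2 <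
        enorm2 (X.mulVec (Bstarᵀ.mulVec v) - X.mulVec (Bstarᵀ.mulVec vstar)) ^ 2) ∧
    (∀ v : Fin k → ℝ,
      (∀ u : Fin k → ℝ,
        enorm2 (X.mulVec (Bstarᵀ.mulVec v) - X.mulVec (Bstarᵀ.mulVec vstar)) ^ 2 ≤
          enorm2 (X.mulVec (Bstarᵀ.mulVec u) - X.mulVec (Bstarᵀ.mulVec vstar)) ^ 2) →
      Bstarᵀ.mulVec v = Bstarᵀ.mulVec vstar) := by
  have hinj := injective_mulVec_transpose_mulVec_of_cangle_pos Bstar hBs X hc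
  have hloss_eq_zero : ∀ v, enorm2 (X *ᵥ Bstarᵀ *ᵥ v - X *ᵥ Bstarᵀ *ᵥ vstar) = 0 ↔ v = vstar :=
    fun v => enorm2_eq_zero.trans (sub_eq_zero.trans hinj.eq_iff)
  have hzero : enorm2 (0 : Fin n → ℝ) ^ 2 = 0 := by simp [enorm2_eq_zero]
  simp only [sub_self, hzero]
  refine ⟨fun v hv => ?_, fun v hmin => ?_⟩
  · exact pow_pos ((enorm2_nonneg _).lt_of_ne (Ne.symm ((hloss_eq_zero v).not.mpr hv))) 2
  · have hle := hmin vstar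
    simp only [sub_self, hzero] at hle
    rw [(hloss_eq_zero v).mp (pow_eq_zero_iff two_ne_zero |>.mp (hle.antisymm (sq_nonneg _)))]

/-- if `cangle(rowspace B*, S) > 0` where `S` is the span of the training
data and `k ≤ dim S`, then `v*` is the unique global minimizer of the linear-probing loss
`v ↦ ‖X B*ᵀ v − X B*ᵀ v*‖₂²`; in particular every minimizer `v` has `B*ᵀ v = B*ᵀ v*`. -/
theorem stmt_15 {n d k : ℕ} (Bstar : Matrix (Fin k) (Fin d) ℝ) (hBs : Bstar * Bstarᵀ = 1)
    (vstar : Fin k → ℝ) (X : Matrix (Fin n) (Fin d) ℝ)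
    (hdim : k ≤ Module.finrank ℝ (rowspace X))
    (hc : 0 < cangle (rowspace Bstar) (rowspace X)) :
    (∀ v : Fin k → ℝ, v ≠ vstar →
      enorm2 (X.mulVec (Bstarᵀ.mulVec vstar) - X.mulVec (Bstarᵀ.mulVec vstar)) ^ 2 <
        enorm2 (X.mulVec (Bstarᵀ.mulVec v) - X.mulVec (Bstarᵀ.mulVec vstar)) ^ 2) ∧
    (∀ v : Fin k → ℝ,
      (∀ u : Fin k → ℝ,
        enorm2 (X.mulVec (Bstarᵀ.mulVec v) - X.mulVec (Bstarᵀ.mulVec vstar)) ^ 2 ≤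
          enorm2 (X.mulVec (Bstarᵀ.mulVec u) - X.mulVec (Bstarᵀ.mulVec vstar)) ^ 2) →
      Bstarᵀ.mulVec v = Bstarᵀ.mulVec vstar) :=
  stmt_15_general Bstar hBs vstar X hc

end
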